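/- Let Z be a real m×q matrix, let Q_R be a real orthogonal m×m matrix, let D½ be a real diagonal m×m matrix with nonnegative diagonal entries, and set R = Q_R (D½)² Q_Rᵀ. Form the pre-array A = [ Z , Q_R·D½ ] (horizontal concatenation) and suppose A = W S Vᵀ where W is an orthogonal m×m matrix, S is a diagonal m×m matrix with all diagonal entries nonzero, and V is a (q+m)×m matrix with orthonormal columns (VᵀV = I_m). Then the innovation covariance R_e = Z Zᵀ + R is invertible and, for every real n×m matrix P_xz, the cubature gain satisfies P_xz R_e⁻¹ = P_xz W S⁻² Wᵀ. -/

import Mathlib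

/-!
The pre-array satisfies `A Aᵀ = Z Zᵀ + Q_R D½ D½ᵀ Q_Rᵀ = Z Zᵀ + R`, while the SVD gives
`A Aᵀ = W S (Vᵀ V) S Wᵀ = W S² Wᵀ`. Since `W` is orthogonal and `S²` invertible, `W S⁻² Wᵀ` is a
left inverse of `W S² Wᵀ`, hence its inverse.
-/

open Matrix

namespace Matrix

section CommSemiring

variable {m k l R : Type*} [Fintype k] [Fintype l] [CommSemiring R]

theorem fromCols_mul_transpose_fromCols (A : Matrix m k R) (B : Matrix m l R) :
    fromCols A B * (fromCols A B)ᵀ = A * Aᵀ + B * Bᵀ := by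
  rw [transpose_fromCols, fromCols_mul_fromRows]

variable [Fintype m] [DecidableEq m]

theorem mul_mul_transpose_mul_transpose_of_transpose_mul_self_eq_one (W S : Matrix m m R)
    {V : Matrix k m R} (hV : Vᵀ * V = 1) :
    W * S * Vᵀ * (W * S * Vᵀ)ᵀ = W * (S * Sᵀ) * Wᵀ := by
  simp only [transpose_mul, transpose_transpose, Matrix.mul_assoc]
  rw [← Matrix.mul_assoc Vᵀ, hV, Matrix.one_mul]

end CommSemiring

section Field

variable {m K : Type*} [Fintype m] [DecidableEq m] [Field K]

theorem mul_inv_mul_transpose_mul_mul_mul_transpose {W D : Matrix m m K} (hW : Wᵀ * W = 1)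
    (hD : IsUnit D) : W * D⁻¹ * Wᵀ * (W * D * Wᵀ) = 1 :=
  calc W * D⁻¹ * Wᵀ * (W * D * Wᵀ) = W * (D⁻¹ * (Wᵀ * W) * D) * Wᵀ := by
        simp only [Matrix.mul_assoc]
    _ = 1 := by
        rw [hW, Matrix.mul_one, nonsing_inv_mul _ ((isUnit_iff_isUnit_det D).mp hD),
          Matrix.mul_one, mul_eq_one_comm.mp hW]

theorem IsDiag.isUnit {S : Matrix m m K} (hS : S.IsDiag) (hSnz : ∀ i, S i i ≠ 0) :
    IsUnit S := by
  rw [← hS.diagonal_diag, isUnit_diagonal, Pi.isUnit_iff]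
  exact fun i => (hSnz i).isUnit

end Field

end Matrix

theorem svd_gain_equiv_conventional_general (m q n : ℕ)
    (Z : Matrix (Fin m) (Fin q) ℝ)
    (QR Dhalf : Matrix (Fin m) (Fin m) ℝ)
    (hDhalf : Dhalf.IsDiag)
    (R : Matrix (Fin m) (Fin m) ℝ) (hR : R = QR * (Dhalf * Dhalf) * QRᵀ)
    (A : Matrix (Fin m) (Fin q ⊕ Fin m) ℝ)
    (hA : A = fromCols Z (QR * Dhalf))
    (W S : Matrix (Fin m) (Fin m) ℝ)
    (hW : Wᵀ * W = 1) (hS : S.IsDiag) (hSnz : ∀ i, S i i ≠ 0)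
    (V : Matrix (Fin q ⊕ Fin m) (Fin m) ℝ) (hV : Vᵀ * V = 1)
    (hSVD : A = W * S * Vᵀ) :
    IsUnit (Z * Zᵀ + R) ∧
      ∀ Pxz : Matrix (Fin n) (Fin m) ℝ,
        Pxz * (Z * Zᵀ + R)⁻¹ = Pxz * W * (S * S)⁻¹ * Wᵀ := by
  have hRA : Z * Zᵀ + R = A * Aᵀ := by
    rw [hA, fromCols_mul_transpose_fromCols, hR, transpose_mul, hDhalf.isSymm.eq]
    simp only [Matrix.mul_assoc]
  have hRe : Z * Zᵀ + R = W * (S * S) * Wᵀ := by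
    rw [hRA, hSVD, mul_mul_transpose_mul_transpose_of_transpose_mul_self_eq_one _ _ hV,
      hS.isSymm.eq]
  have hSS : IsUnit (S * S) := (hS.isUnit hSnz).mul (hS.isUnit hSnz)
  have hleft := mul_inv_mul_transpose_mul_mul_mul_transpose hW hSS
  rw [← hRe] at hleft
  refine ⟨.of_mul_eq_one_right _ hleft, fun Pxz => ?_⟩
  rw [inv_eq_left_inv hleft]
  simp only [Matrix.mul_assoc]

/-- If the measurement-update pre-array `A = [Z, Q_R D½]` has SVD
`A = W S Vᵀ` with `S` diagonal and nonsingular, then `R_e = Z Zᵀ + R` is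
invertible and the cubature gain satisfies `P_xz R_e⁻¹ = P_xz W S⁻² Wᵀ`. -/
theorem svd_gain_equiv_conventional (m q n : ℕ)
    (Z : Matrix (Fin m) (Fin q) ℝ)
    (QR Dhalf : Matrix (Fin m) (Fin m) ℝ)
    (hQR : QRᵀ * QR = 1) (hDhalf : Dhalf.IsDiag) (hDpos : ∀ i, 0 ≤ Dhalf i i)
    (R : Matrix (Fin m) (Fin m) ℝ) (hR : R = QR * (Dhalf * Dhalf) * QRᵀ)
    (A : Matrix (Fin m) (Fin q ⊕ Fin m) ℝ)
    (hA : A = fromCols Z (QR * Dhalf))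
    (W S : Matrix (Fin m) (Fin m) ℝ)
    (hW : Wᵀ * W = 1) (hS : S.IsDiag) (hSnz : ∀ i, S i i ≠ 0)
    (V : Matrix (Fin q ⊕ Fin m) (Fin m) ℝ) (hV : Vᵀ * V = 1)
    (hSVD : A = W * S * Vᵀ) :
    IsUnit (Z * Zᵀ + R) ∧
      ∀ Pxz : Matrix (Fin n) (Fin m) ℝ,
        Pxz * (Z * Zᵀ + R)⁻¹ = Pxz * W * (S * S)⁻¹ * Wᵀ :=
  svd_gain_equiv_conventional_general m q n Z QR Dhalf hDhalf R hR A hA W S hW hS hSnz V hV hSVD
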